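/- arXiv:1801.09282 — 2 statements merged into one kernel-verified Lean document; each statement's English description precedes it below -/
import Mathlib

section
/- The polynomial p(x) = (2/11)(15x - 35x² + 56x³ - 45x⁴ + 14x⁵) is strictly increasing on (0,1] and satisfies p(0) = 0, matching the monotonicity of f(x) = √x on [0,1]. -/
/-- The degree-5 approximant of √x is strictly increasing on (0,1] and vanishes at 0. -/
theorem stmt_8 :
    StrictMonoOn (fun x : ℝ => (2 / 11) * (15 * x - 35 * x ^ 2 + 56 * x ^ 3
        - 45 * x ^ 4 + 14 * x ^ 5)) (Set.Ioc 0 1) ∧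
    (fun x : ℝ => (2 / 11) * (15 * x - 35 * x ^ 2 + 56 * x ^ 3
        - 45 * x ^ 4 + 14 * x ^ 5)) 0 = 0 := by
  constructor
  · have h : StrictMonoOn (fun x : ℝ => (2 / 11) * (15 * x - 35 * x ^ 2 + 56 * x ^ 3
        - 45 * x ^ 4 + 14 * x ^ 5)) (Set.Icc 0 1) := by
      apply StrictMonoOn.mono (s := Set.Icc (0:ℝ) 1) ?_ (le_refl _)
      apply strictMonoOn_of_deriv_pos (convex_Icc 0 1)
      · fun_prop
      · intro x hx
        rw [interior_Icc] at hx
        obtain ⟨hx0, hx1⟩ := hx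
        have : deriv (fun x : ℝ => (2 / 11) * (15 * x - 35 * x ^ 2 + 56 * x ^ 3
            - 45 * x ^ 4 + 14 * x ^ 5)) x
            = (2 / 11) * (15 - 70 * x + 168 * x ^ 2 - 180 * x ^ 3 + 70 * x ^ 4) := by
          have : HasDerivAt (fun x : ℝ => (2 / 11) * (15 * x - 35 * x ^ 2 + 56 * x ^ 3
              - 45 * x ^ 4 + 14 * x ^ 5))
              ((2 / 11) * (15 - 70 * x + 168 * x ^ 2 - 180 * x ^ 3 + 70 * x ^ 4)) x := by
            have h1 : HasDerivAt (fun x : ℝ => 15 * x - 35 * x ^ 2 + 56 * x ^ 3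
                - 45 * x ^ 4 + 14 * x ^ 5)
                (15 - 70 * x + 168 * x ^ 2 - 180 * x ^ 3 + 70 * x ^ 4) x := by
              have := (hasDerivAt_pow 2 x)
              have := (hasDerivAt_pow 3 x)
              have := (hasDerivAt_pow 4 x)
              have := (hasDerivAt_pow 5 x)
              have hid := hasDerivAt_id x
              convert (((((hid.const_mul 15).sub ((hasDerivAt_pow 2 x).const_mul 35)).add
                ((hasDerivAt_pow 3 x).const_mul 56)).sub
                ((hasDerivAt_pow 4 x).const_mul 45)).add
                ((hasDerivAt_pow 5 x).const_mul 14)) using 1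
              · rfl
              · rfl
              · funext y
                simp only [Pi.add_apply, Pi.sub_apply, id]
              · push_cast
                ring
            exact h1.const_mul (2 / 11)
          exact this.deriv
        rw [this]
        have hq : 15 - 70 * x + 168 * x ^ 2 - 180 * x ^ 3 + 70 * x ^ 4 > 0 := by
          nlinarith [sq_nonneg (x - 1/2), sq_nonneg (x^2 - x), sq_nonneg (x - 1),
            sq_nonneg (x^2 - x + 1/4), sq_nonneg x, mul_pos hx0 hx0]
        positivity
    exact h.mono Set.Ioc_subset_Icc_self
  · norm_num
end

section
/- The polynomial q(x) = 1 + (12/π³)·((17π² − 180)x − (35π² − 360)x² + (20π² − 200)x³) is convex on [0,1] has q(0) = 1 = 1 − sin(0), mirroring convexity of f(x) = 1 − sin(πx) on [0,1]. -/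
open Real

/-- The degree-3 approximant of 1 - sin(πx) is convex on [0,1] and equals 1 at 0. -/
theorem stmt_9 :
    ConvexOn ℝ (Set.Icc (0:ℝ) 1)
      (fun x : ℝ => 1 + (12 / π ^ 3) * ((17 * π ^ 2 - 180) * x
        - (35 * π ^ 2 - 360) * x ^ 2 + (20 * π ^ 2 - 200) * x ^ 3)) ∧
    (fun x : ℝ => 1 + (12 / π ^ 3) * ((17 * π ^ 2 - 180) * x
        - (35 * π ^ 2 - 360) * x ^ 2 + (20 * π ^ 2 - 200) * x ^ 3)) 0
      = 1 - Real.sin 0 := by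
  have hπ : (0:ℝ) < π := Real.pi_pos
  have hπl : (3.141592:ℝ) < π := Real.pi_gt_d6
  have hπu : π < 3.141593 := Real.pi_lt_d6
  constructor
  · apply convexOn_of_hasDerivWithinAt2_nonneg (f' := fun x : ℝ =>
        (12 / π ^ 3) * ((17 * π ^ 2 - 180) - 2 * (35 * π ^ 2 - 360) * x
          + 3 * (20 * π ^ 2 - 200) * x ^ 2))
      (f'' := fun x : ℝ =>
        (12 / π ^ 3) * (-2 * (35 * π ^ 2 - 360) + 6 * (20 * π ^ 2 - 200) * x))
      (convex_Icc 0 1)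
    · exact Continuous.continuousOn (by continuity)
    · intro x hx
      have h : HasDerivAt (fun x : ℝ => 1 + (12 / π ^ 3) * ((17 * π ^ 2 - 180) * x
          - (35 * π ^ 2 - 360) * x ^ 2 + (20 * π ^ 2 - 200) * x ^ 3))
          (0 + (12 / π ^ 3) * ((17 * π ^ 2 - 180) * 1 - (35 * π ^ 2 - 360) * (2 * x ^ 1)
            + (20 * π ^ 2 - 200) * (3 * x ^ 2))) x := by
        exact (hasDerivAt_const x (1:ℝ)).add (((((hasDerivAt_id x).const_mul _).sub
          ((hasDerivAt_pow 2 x).const_mul _)).add ((hasDerivAt_pow 3 x).const_mul _)).const_mul _)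
      have h' := h.hasDerivWithinAt (s := interior (Set.Icc (0:ℝ) 1))
      refine h'.congr_deriv ?_
      ring
    · intro x hx
      have h : HasDerivAt (fun x : ℝ =>
          (12 / π ^ 3) * ((17 * π ^ 2 - 180) - 2 * (35 * π ^ 2 - 360) * x
            + 3 * (20 * π ^ 2 - 200) * x ^ 2))
          ((12 / π ^ 3) * ((0 - 2 * (35 * π ^ 2 - 360) * 1)
            + 3 * (20 * π ^ 2 - 200) * (2 * x ^ 1))) x := by
        exact ((((hasDerivAt_const x _).sub ((hasDerivAt_id x).const_mul _)).add
          ((hasDerivAt_pow 2 x).const_mul _)).const_mul _)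
      have h' := h.hasDerivWithinAt (s := interior (Set.Icc (0:ℝ) 1))
      refine h'.congr_deriv ?_
      ring
    · intro x hx
      rw [interior_Icc] at hx
      obtain ⟨hx0, hx1⟩ := hx
      have hc : (0:ℝ) < 12 / π ^ 3 := by positivity
      apply mul_nonneg hc.le
      have h2l : (9.869:ℝ) < π ^ 2 := by nlinarith
      have h2u : π ^ 2 < 9.87 := by nlinarith
      nlinarith [mul_nonneg (sub_nonneg.mpr hx1.le)
        (show (0:ℝ) ≤ 1200 - 120 * π ^ 2 by nlinarith)]
  · simp
end
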